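/- Let δ ∈ (0,1). For all M ∈ ℕ, all t ∈ [δ,1], all families (H_i)_{i∈ℤ}, (K_i)_{i∈ℤ} of complex Hilbert spaces with ℓ²-direct sums H, K, and every bounded linear operator T : H → K, there exists a bounded linear operator S : H → K whose matrix entries satisfy S_{ij} = φ_t(i,j)·(1 − γ_M(i,j))·T_{ij} for all i,j ∈ ℤ, and ‖S‖ ≤ ε(δ,M)·‖T‖. -/
import Mathlib


open scoped ENNReal

/-- The `q`-number `[a]_t = (t^a - t^{-a})/(t - t⁻¹)` for `t ≠ 1`, and `a` for `t = 1`. -/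
noncomputable def qNum (t a : ℝ) : ℝ :=
  if t = 1 then a else (t ^ a - t ^ (-a)) / (t - t⁻¹)

/-- The Schur multiplier `φ_t(i,j) = 1/[(i−j)/2]_t` for `i ≠ j` and `φ_t(i,i) = 0`. -/
noncomputable def phiMul (t : ℝ) (i j : ℤ) : ℂ :=
  if i = j then 0 else ((qNum t (((i : ℝ) - (j : ℝ)) / 2))⁻¹ : ℝ)

/-- The Schur multiplier `γ_M(i,j) = (M+1−|i−j|)/(M+1)` for `|i−j| ≤ M`, and `0` otherwise. -/
noncomputable def gammaMul (M : ℕ) (i j : ℤ) : ℝ :=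
  if |i - j| ≤ (M : ℤ) then ((M : ℝ) + 1 - |(i : ℝ) - (j : ℝ)|) / ((M : ℝ) + 1) else 0

/-- The quantity `ε(δ,M) = √2·(δ^{1/2}+δ^{−1/2})·(M/(M+1)² + Σ_{k=M+1}^∞ 1/k²)^{1/2}`. -/
noncomputable def epsDM (δ : ℝ) (M : ℕ) : ℝ :=
  Real.sqrt 2 * (δ ^ ((1 : ℝ) / 2) + δ ^ (-(1 : ℝ) / 2)) *
    Real.sqrt ((M : ℝ) / ((M : ℝ) + 1) ^ 2 + ∑' k : ℕ, 1 / ((k : ℝ) + (M : ℝ) + 1) ^ 2)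

variable {H K : ℤ → Type} [∀ i, NormedAddCommGroup (H i)] [∀ i, InnerProductSpace ℂ (H i)]
  [∀ i, CompleteSpace (H i)] [∀ i, NormedAddCommGroup (K i)] [∀ i, InnerProductSpace ℂ (K i)]
  [∀ i, CompleteSpace (K i)]

/-- The `(i,j)` matrix entry `T_{ij} = P_i ∘ T ∘ ι_j : H_j → K_i` of a bounded operator
between ℓ²-direct sums. -/
noncomputable def matrixEntry (T : lp H 2 →L[ℂ] lp K 2) (i j : ℤ) (v : H j) : K i :=
  T (lp.single 2 j v) i

section Aux


lemma aux_pow (x : ℝ) (hx0 : 0 < x) (hx1 : x ≤ 1) :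
    ∀ d : ℕ, (d : ℝ) * (x⁻¹ - x) ≤ x⁻¹ ^ d - x ^ d := by
  intro d
  induction d with
  | zero => simp
  | succ n ih =>
    have hyp : 0 < x⁻¹ := inv_pos.2 hx0
    have hxy : x * x⁻¹ = 1 := mul_inv_cancel₀ hx0.ne'
    have hy1 : 1 ≤ x⁻¹ := by nlinarith
    have hprod : x ^ n * x⁻¹ ^ n = 1 := by rw [← mul_pow, hxy, one_pow]
    have hxn1 : x ^ n ≤ 1 := pow_le_one₀ hx0.le hx1
    have hxn0 : 0 < x ^ n := pow_pos hx0 n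
    have hyn1 : 1 ≤ x⁻¹ ^ n := one_le_pow₀ hy1
    have h2 : 2 ≤ x⁻¹ ^ n + x ^ n := by nlinarith
    have hC : (1 - x) * (1 - x ^ n) ≤ (x⁻¹ - 1) * (x⁻¹ ^ n - 1) :=
      mul_le_mul (by nlinarith) (by linarith) (by linarith) (by linarith)
    have hstep : x⁻¹ - x ≤ x⁻¹ ^ (n + 1) - x ^ (n + 1) - (x⁻¹ ^ n - x ^ n) := by
      rw [pow_succ, pow_succ]
      nlinarith [hC]
    push_cast
    linarith

lemma qnum_lower (t : ℝ) (ht0 : 0 < t) (ht1 : t ≤ 1) (d : ℕ) :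
    (d : ℝ) ≤ qNum t ((d : ℝ) / 2) * (Real.sqrt t + (Real.sqrt t)⁻¹) := by
  rcases eq_or_lt_of_le ht1 with h1 | h1
  · rw [h1] at *
    norm_num [qNum]
  · set x := Real.sqrt t with hxdef
    have hx0 : 0 < x := Real.sqrt_pos.2 ht0
    have hx1 : x < 1 := by
      rw [hxdef, show (1:ℝ) = Real.sqrt 1 by simp]
      exact Real.sqrt_lt_sqrt ht0.le h1
    have hx2 : x ^ 2 = t := Real.sq_sqrt ht0.le
    set y := x⁻¹ with hydef
    have hy0 : 0 < y := inv_pos.2 hx0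
    have hyx : x < y := by
      rw [hydef]
      nlinarith [mul_inv_cancel₀ hx0.ne']
    -- rpow computations
    have hpow : t ^ ((d : ℝ) / 2) = x ^ d := by
      rw [show (d : ℝ) / 2 = (1 / 2) * d by ring, Real.rpow_mul ht0.le,
        Real.rpow_natCast, ← Real.rpow_natCast (t ^ ((1:ℝ)/2)) d]
      norm_num
      rw [← Real.sqrt_eq_rpow]
    have hpowneg : t ^ (-((d : ℝ) / 2)) = y ^ d := by
      rw [Real.rpow_neg ht0.le, hpow, hydef, inv_pow]
    have hq : qNum t ((d : ℝ) / 2) = (y ^ d - x ^ d) / ((y - x) * (y + x)) := by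
      rw [qNum, if_neg h1.ne, hpow, hpowneg]
      have htx : t = x ^ 2 := hx2.symm
      have hti : t⁻¹ = y ^ 2 := by rw [htx, hydef]; rw [← inv_pow]
      rw [hti, htx]
      rw [div_eq_div_iff (a := x ^ d - y ^ d) (ne_of_lt (by nlinarith)) (ne_of_gt (by nlinarith))]
      ring
    rw [hq]
    have hkey := aux_pow x hx0 hx1.le d
    rw [← hydef] at hkey
    have hyx0 : 0 < y - x := by linarith
    have hyx0' : 0 < y + x := by linarith
    have : (y ^ d - x ^ d) / ((y - x) * (y + x)) * (x + y) = (y ^ d - x ^ d) / (y - x) := by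
      field_simp
      ring
    rw [this, le_div_iff₀ hyx0]
    linarith

lemma sqrt_sum_le (δ t : ℝ) (hδ0 : 0 < δ) (hδt : δ ≤ t) (ht1 : t ≤ 1) :
    Real.sqrt t + (Real.sqrt t)⁻¹ ≤ δ ^ ((1:ℝ)/2) + δ ^ (-(1:ℝ)/2) := by
  have h1 : δ ^ ((1:ℝ)/2) = Real.sqrt δ := (Real.sqrt_eq_rpow δ).symm
  have h2 : δ ^ (-(1:ℝ)/2) = (Real.sqrt δ)⁻¹ := by
    rw [show -(1:ℝ)/2 = -((1:ℝ)/2) by ring, Real.rpow_neg hδ0.le, h1]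
  rw [h1, h2]
  set a := Real.sqrt t
  set b := Real.sqrt δ
  have hb0 : 0 < b := Real.sqrt_pos.2 hδ0
  have hba : b ≤ a := Real.sqrt_le_sqrt hδt
  have ha0 : 0 < a := lt_of_lt_of_le hb0 hba
  have ha1 : a ≤ 1 := Real.sqrt_le_one.mpr ht1
  have hb1 : b ≤ 1 := Real.sqrt_le_one.mpr (le_trans hδt ht1)
  have hai : a * a⁻¹ = 1 := mul_inv_cancel₀ ha0.ne'
  have hbi : b * b⁻¹ = 1 := mul_inv_cancel₀ hb0.ne'
  have hbipos : 0 < b⁻¹ := inv_pos.2 hb0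
  have haipos : 0 < a⁻¹ := inv_pos.2 ha0
  have ha1' : 1 ≤ a⁻¹ := by nlinarith
  have hb1' : 1 ≤ b⁻¹ := by nlinarith
  have hinv : 1 ≤ a⁻¹ * b⁻¹ := by nlinarith
  have e1 : a * (a⁻¹ * b⁻¹) = b⁻¹ := by
    rw [← mul_assoc, hai, one_mul]
  have e2 : b * (a⁻¹ * b⁻¹) = a⁻¹ := by
    rw [mul_comm a⁻¹ b⁻¹, ← mul_assoc, hbi, one_mul]
  have key : 0 ≤ (a - b) * (a⁻¹ * b⁻¹ - 1) :=
    mul_nonneg (sub_nonneg.2 hba) (sub_nonneg.2 hinv)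
  nlinarith [key, e1, e2]

lemma qnum_odd (t a : ℝ) : qNum t (-a) = -(qNum t a) := by
  unfold qNum
  split
  · ring
  · rw [neg_neg]
    ring

lemma qnum_inv_bound (δ t : ℝ) (hδ0 : 0 < δ) (hδt : δ ≤ t) (ht1 : t ≤ 1) (d : ℤ) (hd : d ≠ 0) :
    |(qNum t ((d : ℝ) / 2))⁻¹| ≤ (δ ^ ((1:ℝ)/2) + δ ^ (-(1:ℝ)/2)) / |(d : ℝ)| := by
  have ht0 : 0 < t := lt_of_lt_of_le hδ0 hδt
  set k := d.natAbs with hkdef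
  have hk1 : 1 ≤ k := Int.natAbs_pos.2 hd
  have hk0 : (0:ℝ) < (k:ℝ) := by exact_mod_cast hk1
  have habs : |(d:ℝ)| = (k:ℝ) := by
    rw [hkdef, Nat.cast_natAbs, Int.cast_abs]
  have hqabs : |qNum t ((d:ℝ)/2)| = |qNum t ((k:ℝ)/2)| := by
    rcases Int.natAbs_eq d with h | h
    · rw [← hkdef] at h
      rw [h]
      push_cast
      ring_nf
    · rw [← hkdef] at h
      rw [h]
      push_cast
      rw [neg_div, qnum_odd, abs_neg]
  set s := Real.sqrt t + (Real.sqrt t)⁻¹ with hsdef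
  have hs0 : 0 < s := by
    have := Real.sqrt_pos.2 ht0
    have := inv_pos.2 this
    positivity
  have hlow := qnum_lower t ht0 ht1 k
  rw [← hsdef] at hlow
  have hqpos : 0 < qNum t ((k:ℝ)/2) := by
    by_contra hq
    push_neg at hq
    nlinarith [mul_nonpos_of_nonpos_of_nonneg hq hs0.le]
  have hsc : s ≤ δ ^ ((1:ℝ)/2) + δ ^ (-(1:ℝ)/2) := sqrt_sum_le δ t hδ0 hδt ht1
  rw [abs_inv, hqabs, abs_of_pos hqpos, habs]
  rw [inv_eq_one_div, div_le_div_iff₀ hqpos hk0]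
  nlinarith [mul_le_mul_of_nonneg_left hsc hqpos.le]

lemma hasSumF (c : ℝ) (M : ℕ) :
    HasSum (fun d : ℤ => if d = 0 then (0:ℝ) else
        if |d| ≤ (M:ℤ) then c^2 * (1/((M:ℝ)+1)^2) else c^2 * (1/(d:ℝ)^2))
      (2 * (c^2 * ((M:ℝ)/((M:ℝ)+1)^2 + ∑' k : ℕ, 1/((k:ℝ)+(M:ℝ)+1)^2))) := by
  set B := ∑' k : ℕ, 1/((k:ℝ)+(M:ℝ)+1)^2 with hBdef
  set F : ℤ → ℝ := fun d => if d = 0 then (0:ℝ) else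
      if |d| ≤ (M:ℤ) then c^2 * (1/((M:ℝ)+1)^2) else c^2 * (1/(d:ℝ)^2) with hFdef
  have hB : Summable (fun k : ℕ => 1/((k:ℝ)+(M:ℝ)+1)^2) := by
    have h0 : Summable (fun n : ℕ => 1/(n:ℝ)^2) := by
      exact_mod_cast Real.summable_one_div_nat_pow.mpr (by norm_num)
    have := (summable_nat_add_iff (M+1)).mpr h0
    refine this.congr fun n => ?_
    push_cast
    ring_nf
  set f : ℕ → ℝ := fun n => F ((n:ℤ)+1) with hfdef
  have hfshift : ∀ n : ℕ, f (n + M) = c^2 * (1/((n:ℝ)+(M:ℝ)+1)^2) := by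
    intro n
    have h1 : ((n + M : ℕ):ℤ) + 1 ≠ 0 := by positivity
    have h2 : ¬ |((n + M : ℕ):ℤ) + 1| ≤ (M:ℤ) := by
      rw [abs_of_nonneg (by positivity)]
      push_cast
      omega
    simp only [hfdef, hFdef, if_neg h1, if_neg h2]
    push_cast
    ring_nf
  have hftail : Summable (fun n : ℕ => f (n + M)) := by
    refine (hB.mul_left (c^2)).congr fun n => (hfshift n).symm
  have hf_sum : Summable f := (summable_nat_add_iff M).1 hftail
  have htail_tsum : ∑' n : ℕ, f (n + M) = c^2 * B := by
    rw [hBdef, ← tsum_mul_left]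
    exact tsum_congr hfshift
  have hhead : ∑ i ∈ Finset.range M, f i = (M:ℝ) * (c^2 * (1/((M:ℝ)+1)^2)) := by
    have hterm : ∀ i ∈ Finset.range M, f i = c^2 * (1/((M:ℝ)+1)^2) := by
      intro i hi
      rw [Finset.mem_range] at hi
      have h1 : ((i:ℤ)+1) ≠ 0 := by positivity
      have h2 : |((i:ℤ)+1)| ≤ (M:ℤ) := by
        rw [abs_of_nonneg (by positivity)]
        omega
      simp only [hfdef, hFdef, if_neg h1, if_pos h2]
    rw [Finset.sum_congr rfl hterm, Finset.sum_const, Finset.card_range, nsmul_eq_mul]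
  have hfval : ∑' n, f n = c^2 * ((M:ℝ)/((M:ℝ)+1)^2) + c^2 * B := by
    rw [← Summable.sum_add_tsum_nat_add M hf_sum, htail_tsum, hhead]
    ring
  have hs : HasSum f (c^2 * ((M:ℝ)/((M:ℝ)+1)^2) + c^2 * B) := hfval ▸ hf_sum.hasSum
  have hnat : HasSum (fun n : ℕ => F n) (c^2 * ((M:ℝ)/((M:ℝ)+1)^2) + c^2 * B) := by
    have h1 : HasSum (fun n : ℕ => F ((n:ℤ) + 1))
        (c^2 * ((M:ℝ)/((M:ℝ)+1)^2) + c^2 * B) := hs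
    have h2 : HasSum (fun n : ℕ => F (((n + 1 : ℕ) : ℤ)))
        (c^2 * ((M:ℝ)/((M:ℝ)+1)^2) + c^2 * B) := by
      refine h1.congr_fun fun n => ?_
      push_cast
      ring_nf
    have := (hasSum_nat_add_iff (f := fun n : ℕ => F n) 1).1 h2
    simpa [hFdef] using this
  have hFeven : ∀ n : ℕ, F (-((n:ℤ)+1)) = F ((n:ℤ)+1) := by
    intro n
    simp only [hFdef, neg_eq_zero, abs_neg]
    rcases eq_or_ne ((n:ℤ)+1) 0 with h | h
    · rw [if_pos h, if_pos h]
    · rw [if_neg h, if_neg h]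
      split
      · rfl
      · push_cast
        ring_nf
  have hneg : HasSum (fun n : ℕ => F (-((n:ℤ)+1)))
      (c^2 * ((M:ℝ)/((M:ℝ)+1)^2) + c^2 * B) := by
    refine hs.congr_fun fun n => ?_
    rw [hFeven]
  have htot := hnat.of_nat_of_neg_add_one hneg
  convert htot using 1
  ring

lemma rpow_two' (x : ℝ) : x ^ (2:ℝ) = x ^ 2 := by
  rw [show (2:ℝ) = ((2:ℕ):ℝ) by norm_num, Real.rpow_natCast]

lemma norm_real_c (r : ℝ) : ‖(r:ℂ)‖ = |r| := by
  rw [Complex.norm_real, Real.norm_eq_abs]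

lemma two_toReal : ((2:ℝ≥0∞)).toReal = (2:ℝ) := by norm_num

lemma memℓp_two_iff {α : Type} {E : α → Type} [∀ i, NormedAddCommGroup (E i)] (f : ∀ i, E i) :
    Memℓp f 2 ↔ Summable (fun i => ‖f i‖^2) := by
  rw [memℓp_gen_iff (by norm_num)]
  constructor <;> intro h <;> refine h.congr fun i => ?_ <;>
    rw [two_toReal, rpow_two']

lemma lp_hasSum_norm_sq {α : Type} {E : α → Type} [∀ i, NormedAddCommGroup (E i)] (f : lp E 2) :
    HasSum (fun i => ‖f i‖^2) (‖f‖^2) := by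
  have h := lp.hasSum_norm (p := 2) (by norm_num) f
  rw [two_toReal, rpow_two'] at h
  refine h.congr_fun fun i => ?_
  rw [rpow_two']


lemma schur_exists (m : ℤ → ℂ) (C : ℝ) (hC : 0 ≤ C)
    (hsm : Summable fun d : ℤ => ‖m d‖^2)
    (hsm_le : ∑' d : ℤ, ‖m d‖^2 ≤ C^2)
    (T : lp H 2 →L[ℂ] lp K 2) :
    ∃ S : lp H 2 →L[ℂ] lp K 2,
      (∀ (i j : ℤ) (v : H j), matrixEntry S i j v = m (i - j) • matrixEntry T i j v) ∧
      ‖S‖ ≤ C * ‖T‖ := by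
  classical
  set Sm := ∑' d : ℤ, ‖m d‖^2 with hSmdef
  have hSm_nonneg : 0 ≤ Sm := tsum_nonneg fun d => sq_nonneg _
  have hm_bd : ∀ d, ‖m d‖^2 ≤ C^2 := fun d =>
    le_trans (Summable.le_tsum hsm d fun j _ => sq_nonneg _) hsm_le
  have hv2 : ∀ v : lp H 2, Summable fun j => ‖v j‖^2 := fun v =>
    (memℓp_two_iff _).1 (lp.memℓp v)
  -- the diagonal multiplication operators
  have memMa : ∀ (i : ℤ) (v : lp H 2), Memℓp (fun j => m (i - j) • v j) 2 := by
    intro i v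
    rw [memℓp_two_iff]
    refine Summable.of_nonneg_of_le (fun j => sq_nonneg _) (fun j => ?_)
      ((hv2 v).mul_left (C^2))
    rw [norm_smul, mul_pow]
    exact mul_le_mul_of_nonneg_right (hm_bd _) (sq_nonneg _)
  set Ma : ℤ → lp H 2 → lp H 2 := fun i v => ⟨fun j => m (i - j) • v j, memMa i v⟩
    with hMadef
  have Ma_apply : ∀ (i : ℤ) (v : lp H 2) (j : ℤ), (Ma i v) j = m (i - j) • v j :=
    fun _ _ _ => rfl
  -- double sum estimates
  have hrow : ∀ (v : lp H 2) (j : ℤ), Summable fun i : ℤ => ‖m (i - j)‖^2 * ‖v j‖^2 := by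
    intro v j
    exact Summable.mul_right _ (hsm.comp_injective (Equiv.subRight j).injective)
  have hrowsum : ∀ (v : lp H 2) (j : ℤ),
      ∑' i : ℤ, ‖m (i - j)‖^2 * ‖v j‖^2 = Sm * ‖v j‖^2 := by
    intro v j
    rw [tsum_mul_right, hSmdef]
    congr 1
    exact (Equiv.subRight j).tsum_eq (fun d => ‖m d‖^2)
  have hKey : ∀ v : lp H 2,
      (∀ i : ℤ, Summable fun j : ℤ => ‖m (i - j)‖^2 * ‖v j‖^2) ∧
      (Summable fun i : ℤ => ∑' j : ℤ, ‖m (i - j)‖^2 * ‖v j‖^2) ∧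
      ∑' (i : ℤ) (j : ℤ), ‖m (i - j)‖^2 * ‖v j‖^2 = Sm * ‖v‖^2 := by
    intro v
    set G : ℤ → ℤ → ℝ := fun j i => ‖m (i - j)‖^2 * ‖v j‖^2 with hGdef
    have hGnn : ∀ p : ℤ × ℤ, 0 ≤ Function.uncurry G p :=
      fun p => mul_nonneg (sq_nonneg _) (sq_nonneg _)
    have h₁ : ∀ j, Summable (G j) := fun j => hrow v j
    have hsumrow : Summable fun j => ∑' i, G j i := by
      refine ((hv2 v).mul_left Sm).congr fun j => ?_
      exact (hrowsum v j).symm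
    have hunc : Summable (Function.uncurry G) :=
      (summable_prod_of_nonneg hGnn).2 ⟨h₁, hsumrow⟩
    have hswap : Summable (fun p : ℤ × ℤ => G p.2 p.1) := hunc.prod_symm
    have h₂ : ∀ i, Summable fun j => G j i := fun i => hswap.prod_factor i
    have hcolv : Summable fun i => ∑' j, G j i := hswap.prod
    have hcomm : ∑' (i : ℤ) (j : ℤ), G j i = ∑' (j : ℤ) (i : ℤ), G j i :=
      Summable.tsum_comm' hunc h₁ h₂
    refine ⟨h₂, hcolv, ?_⟩
    rw [hcomm]
    calc ∑' (j : ℤ) (i : ℤ), G j i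
        = ∑' j : ℤ, Sm * ‖v j‖^2 := tsum_congr fun j => hrowsum v j
      _ = Sm * ∑' j : ℤ, ‖v j‖^2 := tsum_mul_left
      _ = Sm * ‖v‖^2 := by rw [(lp_hasSum_norm_sq v).tsum_eq]
  have hcol1 : ∀ (v : lp H 2) (i : ℤ), Summable fun j : ℤ => ‖m (i - j)‖^2 * ‖v j‖^2 :=
    fun v => (hKey v).1
  have hcol : ∀ v : lp H 2, Summable fun i : ℤ => ∑' j : ℤ, ‖m (i - j)‖^2 * ‖v j‖^2 :=
    fun v => (hKey v).2.1
  have htotal : ∀ v : lp H 2,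
      ∑' (i : ℤ) (j : ℤ), ‖m (i - j)‖^2 * ‖v j‖^2 = Sm * ‖v‖^2 :=
    fun v => (hKey v).2.2
  have hMa_norm_sq : ∀ (v : lp H 2) (i : ℤ),
      ‖Ma i v‖^2 = ∑' j : ℤ, ‖m (i - j)‖^2 * ‖v j‖^2 := by
    intro v i
    rw [← (lp_hasSum_norm_sq (Ma i v)).tsum_eq]
    refine tsum_congr fun j => ?_
    rw [Ma_apply, norm_smul, mul_pow]
  have hTbd : ∀ (v : lp H 2) (i : ℤ),
      ‖T (Ma i v) i‖^2 ≤ ‖T‖^2 * ∑' j : ℤ, ‖m (i - j)‖^2 * ‖v j‖^2 := by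
    intro v i
    rw [← hMa_norm_sq, ← mul_pow]
    refine pow_le_pow_left₀ (norm_nonneg _) ?_ 2
    exact le_trans (lp.norm_apply_le_norm two_ne_zero (T (Ma i v)) i) (T.le_opNorm _)
  have memS : ∀ v : lp H 2, Memℓp (fun i => T (Ma i v) i) 2 := by
    intro v
    rw [memℓp_two_iff]
    exact Summable.of_nonneg_of_le (fun i => sq_nonneg _) (hTbd v)
      ((hcol v).mul_left (‖T‖^2))
  have Ma_add : ∀ (i : ℤ) (v w : lp H 2), Ma i (v + w) = Ma i v + Ma i w := by
    intro i v w
    apply lp.ext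
    funext j
    have : (↑(Ma i v + Ma i w) : ∀ j, H j) j = (Ma i v) j + (Ma i w) j := by
      rw [lp.coeFn_add]; rfl
    rw [this, Ma_apply, Ma_apply, Ma_apply]
    have : (↑(v + w) : ∀ j, H j) j = v j + w j := by rw [lp.coeFn_add]; rfl
    rw [this, smul_add]
  have Ma_smul : ∀ (i : ℤ) (a : ℂ) (v : lp H 2), Ma i (a • v) = a • Ma i v := by
    intro i a v
    apply lp.ext
    funext j
    have h1 : (↑(a • Ma i v) : ∀ j, H j) j = a • (Ma i v) j := by rw [lp.coeFn_smul]; rfl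
    rw [h1, Ma_apply, Ma_apply]
    have h2 : (↑(a • v) : ∀ j, H j) j = a • v j := by rw [lp.coeFn_smul]; rfl
    rw [h2, smul_comm]
  set Sfun : lp H 2 → lp K 2 := fun v => ⟨fun i => T (Ma i v) i, memS v⟩ with hSfundef
  have Sfun_add : ∀ v w : lp H 2, Sfun (v + w) = Sfun v + Sfun w := by
    intro v w
    apply lp.ext
    funext i
    have h1 : (↑(Sfun v + Sfun w) : ∀ i, K i) i = (Sfun v) i + (Sfun w) i := by
      rw [lp.coeFn_add]; rfl
    rw [h1]
    show T (Ma i (v + w)) i = _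
    rw [Ma_add, map_add]
    have h2 : (↑(T (Ma i v) + T (Ma i w)) : ∀ i, K i) i = T (Ma i v) i + T (Ma i w) i := by
      rw [lp.coeFn_add]; rfl
    rw [h2]
  have Sfun_smul : ∀ (a : ℂ) (v : lp H 2), Sfun (a • v) = a • Sfun v := by
    intro a v
    apply lp.ext
    funext i
    have h1 : (↑(a • Sfun v) : ∀ i, K i) i = a • (Sfun v) i := by
      rw [lp.coeFn_smul]; rfl
    rw [h1]
    show T (Ma i (a • v)) i = _
    rw [Ma_smul, map_smul]
    have h2 : (↑(a • T (Ma i v)) : ∀ i, K i) i = a • T (Ma i v) i := by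
      rw [lp.coeFn_smul]; rfl
    rw [h2]
  set S₀ : lp H 2 →ₗ[ℂ] lp K 2 :=
    { toFun := Sfun
      map_add' := Sfun_add
      map_smul' := by
        intro a v
        simp only [RingHom.id_apply]
        exact Sfun_smul a v } with hS₀def
  have hS₀_apply : ∀ (v : lp H 2) (i : ℤ), (S₀ v) i = T (Ma i v) i := fun _ _ => rfl
  have hbound : ∀ v : lp H 2, ‖S₀ v‖ ≤ (C * ‖T‖) * ‖v‖ := by
    intro v
    have hsq : ‖S₀ v‖^2 ≤ ((C * ‖T‖) * ‖v‖)^2 := by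
      have h1 : ‖S₀ v‖^2 = ∑' i : ℤ, ‖T (Ma i v) i‖^2 := by
        rw [← (lp_hasSum_norm_sq (S₀ v)).tsum_eq]
        exact tsum_congr fun i => rfl
      rw [h1]
      calc ∑' i : ℤ, ‖T (Ma i v) i‖^2
          ≤ ∑' i : ℤ, ‖T‖^2 * ∑' j : ℤ, ‖m (i - j)‖^2 * ‖v j‖^2 := by
            refine Summable.tsum_le_tsum (hTbd v) ?_ ((hcol v).mul_left (‖T‖^2))
            exact Summable.of_nonneg_of_le (fun i => sq_nonneg _) (hTbd v)
              ((hcol v).mul_left (‖T‖^2))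
        _ = ‖T‖^2 * ∑' (i : ℤ) (j : ℤ), ‖m (i - j)‖^2 * ‖v j‖^2 := tsum_mul_left
        _ = ‖T‖^2 * (Sm * ‖v‖^2) := by rw [htotal]
        _ ≤ ‖T‖^2 * (C^2 * ‖v‖^2) := by
            refine mul_le_mul_of_nonneg_left ?_ (sq_nonneg _)
            exact mul_le_mul_of_nonneg_right hsm_le (sq_nonneg _)
        _ = ((C * ‖T‖) * ‖v‖)^2 := by ring
    have h0 : (0:ℝ) ≤ (C * ‖T‖) * ‖v‖ := by positivity
    nlinarith [norm_nonneg (S₀ v)]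
  refine ⟨S₀.mkContinuous ((C * ‖T‖)) hbound, ?_, ?_⟩
  · intro i j v
    have hMs : Ma i (lp.single 2 j v) = m (i - j) • lp.single 2 j v := by
      apply lp.ext
      funext j'
      have h1 : (↑(m (i - j) • lp.single 2 j v) : ∀ j, H j) j'
          = m (i - j) • (lp.single 2 j v) j' := by rw [lp.coeFn_smul]; rfl
      rw [h1, Ma_apply]
      by_cases hj : j' = j
      · subst hj
        rfl
      · rw [lp.single_apply_ne 2 j v hj, smul_zero, smul_zero]
    show (S₀ (lp.single 2 j v)) i = _
    rw [hS₀_apply, hMs, map_smul]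
    have : (↑(m (i - j) • T (lp.single 2 j v)) : ∀ i, K i) i
        = m (i - j) • T (lp.single 2 j v) i := by rw [lp.coeFn_smul]; rfl
    rw [this]
    rfl
  · exact S₀.mkContinuous_norm_le (by positivity) hbound

end Aux

/-- Let `δ ∈ (0,1)`.  For all `M ∈ ℕ`, `t ∈ [δ,1]`, and every bounded operator
`T : ⊕_{i∈ℤ} H_i → ⊕_{i∈ℤ} K_i` between ℓ²-direct sums of Hilbert spaces, there exists a
bounded operator `S` with matrix entries `S_{ij} = φ_t(i,j)·(1 − γ_M(i,j))·T_{ij}`, and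
`‖S‖ ≤ ε(δ,M)·‖T‖`. -/
theorem statement11 (δ : ℝ) (hδ0 : 0 < δ) (hδ1 : δ < 1) (M : ℕ) (t : ℝ)
    (htδ : δ ≤ t) (ht1 : t ≤ 1) (T : lp H 2 →L[ℂ] lp K 2) :
    ∃ S : lp H 2 →L[ℂ] lp K 2,
      (∀ (i j : ℤ) (v : H j),
        matrixEntry S i j v =
          (phiMul t i j * (1 - (gammaMul M i j : ℂ))) • matrixEntry T i j v) ∧
      ‖S‖ ≤ epsDM δ M * ‖T‖ := by
  classical
  set c : ℝ := δ ^ ((1:ℝ)/2) + δ ^ (-(1:ℝ)/2) with hcdef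
  have hc0 : 0 ≤ c :=
    add_nonneg (Real.rpow_nonneg hδ0.le _) (Real.rpow_nonneg hδ0.le _)
  set m : ℤ → ℂ := fun d => phiMul t d 0 * (1 - (gammaMul M d 0 : ℂ)) with hmdef
  -- the Toeplitz property of the multiplier
  have hshift : ∀ i j : ℤ,
      phiMul t i j * (1 - (gammaMul M i j : ℂ)) = m (i - j) := by
    intro i j
    have h1 : phiMul t i j = phiMul t (i - j) 0 := by
      unfold phiMul
      rcases eq_or_ne i j with h | h
      · rw [if_pos h, if_pos (by omega)]
      · rw [if_neg h, if_neg (by omega)]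
        push_cast
        ring_nf
    have h2 : gammaMul M i j = gammaMul M (i - j) 0 := by
      unfold gammaMul
      rw [show i - j - 0 = i - j by ring]
      rcases le_or_gt |i - j| (M:ℤ) with h | h
      · rw [if_pos h, if_pos h]
        push_cast
        ring_nf
      · rw [if_neg (not_le.2 h), if_neg (not_le.2 h)]
    rw [h1, h2, hmdef]
  -- pointwise bound on the multiplier
  set F : ℤ → ℝ := fun d => if d = 0 then (0:ℝ) else
      if |d| ≤ (M:ℤ) then c^2 * (1/((M:ℝ)+1)^2) else c^2 * (1/(d:ℝ)^2) with hFdef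
  have hF : HasSum F
      (2 * (c^2 * ((M:ℝ)/((M:ℝ)+1)^2 + ∑' k : ℕ, 1/((k:ℝ)+(M:ℝ)+1)^2))) := hasSumF c M
  have hmF : ∀ d : ℤ, ‖m d‖^2 ≤ F d := by
    intro d
    rcases eq_or_ne d 0 with h | h
    · subst h
      simp only [hmdef, hFdef, phiMul, if_pos rfl, zero_mul, norm_zero, if_pos rfl]
      norm_num
    · have hd0 : (0:ℝ) < |(d:ℝ)| := by
        rw [abs_pos]
        exact_mod_cast h
      have hphi : ‖phiMul t d 0‖ = |(qNum t ((d:ℝ)/2))⁻¹| := by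
        unfold phiMul
        rw [if_neg (by omega), norm_real_c, Int.cast_zero, sub_zero]
      have hq := qnum_inv_bound δ t hδ0 htδ ht1 d h
      rw [← hcdef] at hq
      simp only [hmdef, hFdef, if_neg h]
      rw [norm_mul, hphi]
      rcases le_or_gt |d| (M:ℤ) with hcase | hcase
      · rw [if_pos hcase]
        have hM1 : (0:ℝ) < (M:ℝ) + 1 := by positivity
        have hγ : gammaMul M d 0 = ((M:ℝ) + 1 - |(d:ℝ)|)/((M:ℝ)+1) := by
          unfold gammaMul
          rw [if_pos (by rwa [sub_zero]), Int.cast_zero, sub_zero]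
        have hre : ((M:ℝ) + 1 - |(d:ℝ)|)/((M:ℝ)+1) = 1 - |(d:ℝ)|/((M:ℝ)+1) := by
          field_simp
        have h1γ : (1:ℂ) - (gammaMul M d 0 : ℂ) = ((|(d:ℝ)|/((M:ℝ)+1) : ℝ) : ℂ) := by
          rw [hγ, hre]
          push_cast
          ring
        have hnorm1γ : ‖(1:ℂ) - (gammaMul M d 0 : ℂ)‖ = |(d:ℝ)|/((M:ℝ)+1) := by
          rw [h1γ, norm_real_c, abs_of_nonneg (by positivity)]
        rw [hnorm1γ]
        have hle : |(qNum t ((d:ℝ)/2))⁻¹| * (|(d:ℝ)|/((M:ℝ)+1)) ≤ c / ((M:ℝ)+1) := by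
          calc |(qNum t ((d:ℝ)/2))⁻¹| * (|(d:ℝ)|/((M:ℝ)+1))
              ≤ (c / |(d:ℝ)|) * (|(d:ℝ)|/((M:ℝ)+1)) := by
                refine mul_le_mul_of_nonneg_right hq (by positivity)
            _ = c / ((M:ℝ)+1) := by field_simp
        calc (|(qNum t ((d:ℝ)/2))⁻¹| * (|(d:ℝ)|/((M:ℝ)+1)))^2
            ≤ (c / ((M:ℝ)+1))^2 := pow_le_pow_left₀ (by positivity) hle 2
          _ = c^2 * (1/((M:ℝ)+1)^2) := by field_simp
      · rw [if_neg (not_le.2 hcase)]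
        have hγ : gammaMul M d 0 = 0 := by
          unfold gammaMul
          rw [if_neg (by rw [sub_zero]; omega)]
        rw [hγ]
        have hone : ‖(1:ℂ) - ((0:ℝ):ℂ)‖ = 1 := by norm_num
        rw [hone, mul_one]
        calc |(qNum t ((d:ℝ)/2))⁻¹|^2 ≤ (c / |(d:ℝ)|)^2 :=
              pow_le_pow_left₀ (abs_nonneg _) hq 2
          _ = c^2 * (1/(d:ℝ)^2) := by
              rw [div_pow, sq_abs]
              ring
  have hsm : Summable fun d : ℤ => ‖m d‖^2 :=
    Summable.of_nonneg_of_le (fun d => sq_nonneg _) hmF hF.summable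
  have hB_nonneg : (0:ℝ) ≤ (M:ℝ)/((M:ℝ)+1)^2 + ∑' k : ℕ, 1/((k:ℝ)+(M:ℝ)+1)^2 := by
    have h1 : (0:ℝ) ≤ (M:ℝ)/((M:ℝ)+1)^2 := by positivity
    have h2 : (0:ℝ) ≤ ∑' k : ℕ, 1/((k:ℝ)+(M:ℝ)+1)^2 :=
      tsum_nonneg fun k => by positivity
    linarith
  have heps_sq : epsDM δ M ^ 2
      = 2 * (c^2 * ((M:ℝ)/((M:ℝ)+1)^2 + ∑' k : ℕ, 1/((k:ℝ)+(M:ℝ)+1)^2)) := by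
    rw [epsDM, ← hcdef, mul_pow, mul_pow, Real.sq_sqrt (by norm_num : (0:ℝ) ≤ 2),
      Real.sq_sqrt hB_nonneg]
    ring
  have heps0 : 0 ≤ epsDM δ M := by
    rw [epsDM, ← hcdef]
    have := Real.sqrt_nonneg (2:ℝ)
    have := Real.sqrt_nonneg ((M:ℝ)/((M:ℝ)+1)^2 + ∑' k : ℕ, 1/((k:ℝ)+(M:ℝ)+1)^2)
    positivity
  have hsm_le : ∑' d : ℤ, ‖m d‖^2 ≤ (epsDM δ M)^2 := by
    rw [heps_sq]
    exact le_trans (Summable.tsum_le_tsum hmF hsm hF.summable) (le_of_eq hF.tsum_eq)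
  obtain ⟨S, hS1, hS2⟩ := schur_exists m (epsDM δ M) heps0 hsm hsm_le T
  refine ⟨S, fun i j v => ?_, hS2⟩
  rw [hS1 i j v, hshift i j]
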